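/- arXiv:quant-ph/0505110 — 2 statements merged into one kernel-verified Lean document; each statement's English description precedes it below -/
import Mathlib

section
/- If Λ₁ and Λ₂ are A↛B semicausal channels on the bipartite system A × B, then their composition Λ₁ ∘ Λ₂ is also an A↛B semicausal channel (the A↛B semicausal channels form a semigroup under composition). -/
open Matrix BigOperators
open scoped Kronecker ComplexOrder

noncomputable section

/-- Partial trace over the `A` factor. -/
def trA {A B : Type*} [Fintype A] (ρ : Matrix (A × B) (A × B) ℂ) : Matrix B B ℂ :=
  Matrix.of fun b b' => ∑ a, ρ (a, b) (a, b')

/-- Partial trace over the `B` factor. -/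
def trB {A B : Type*} [Fintype B] (ρ : Matrix (A × B) (A × B) ℂ) : Matrix A A ℂ :=
  Matrix.of fun a a' => ∑ b, ρ (a, b) (a', b)

/-- A state: positive semidefinite matrix of trace 1. -/
def IsState {n : Type*} [Fintype n] (ρ : Matrix n n ℂ) : Prop :=
  ρ.PosSemidef ∧ ρ.trace = 1

/-- A channel: a map admitting a Kraus representation `Λ[X] = ∑ i, K i * X * (K i)ᴴ`
with `∑ i, (K i)ᴴ * K i = 1` (completely positive and trace-preserving). -/
def IsChannel {n : Type*} [Fintype n] [DecidableEq n]
    (Λ : Matrix n n ℂ → Matrix n n ℂ) : Prop :=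
  ∃ (m : ℕ) (K : Fin m → Matrix n n ℂ),
    (∀ X, Λ X = ∑ i, K i * X * (K i)ᴴ) ∧ (∑ i, (K i)ᴴ * K i = 1)

/-- The induced map `Γ ⊗ id` on the bipartite system, acting blockwise. -/
def tensIdA {A B : Type*} (Γ : Matrix A A ℂ → Matrix A A ℂ)
    (ρ : Matrix (A × B) (A × B) ℂ) : Matrix (A × B) (A × B) ℂ :=
  Matrix.of fun p q => Γ (Matrix.of fun a a' => ρ (a, p.2) (a', q.2)) p.1 q.1

/-- The induced map `id ⊗ Γ` on the bipartite system, acting blockwise. -/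
def tensIdB {A B : Type*} (Γ : Matrix B B ℂ → Matrix B B ℂ)
    (ρ : Matrix (A × B) (A × B) ℂ) : Matrix (A × B) (A × B) ℂ :=
  Matrix.of fun p q => Γ (Matrix.of fun b b' => ρ (p.1, b) (q.1, b')) p.2 q.2

/-- `Λ` is A↛B semicausal: no channel applied by Alice beforehand affects Bob's
reduced output state. -/
def SemicausalAtoB {A B : Type*} [Fintype A] [Fintype B] [DecidableEq A]
    (Λ : Matrix (A × B) (A × B) ℂ → Matrix (A × B) (A × B) ℂ) : Prop :=
  ∀ ρ : Matrix (A × B) (A × B) ℂ, IsState ρ →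
    ∀ Γ : Matrix A A ℂ → Matrix A A ℂ, IsChannel Γ →
      trA (Λ (tensIdA Γ ρ)) = trA (Λ ρ)

/-- `Λ` is A↚B semicausal: no channel applied by Bob beforehand affects Alice's
reduced output state. -/
def SemicausalBtoA {A B : Type*} [Fintype A] [Fintype B] [DecidableEq B]
    (Λ : Matrix (A × B) (A × B) ℂ → Matrix (A × B) (A × B) ℂ) : Prop :=
  ∀ ρ : Matrix (A × B) (A × B) ℂ, IsState ρ →
    ∀ Γ : Matrix B B ℂ → Matrix B B ℂ, IsChannel Γ →
      trB (Λ (tensIdB Γ ρ)) = trB (Λ ρ)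

/-- `Λ` is causal: both A↛B and A↚B semicausal. -/
def Causal {A B : Type*} [Fintype A] [Fintype B] [DecidableEq A] [DecidableEq B]
    (Λ : Matrix (A × B) (A × B) ℂ → Matrix (A × B) (A × B) ℂ) : Prop :=
  SemicausalAtoB Λ ∧ SemicausalBtoA Λ

/-! The Bob-marginal of the output of an A↛B semicausal channel `Λ` depends on the input only
through its Bob-marginal `trA σ`. Indeed, precomposing with Alice's channel
`X ↦ tr X • |a₀⟩⟨a₀|` does not change `trA (Λ σ)`, and it sends any two inputs with the same
`trA` to the same input. So if `Λ₂` is semicausal, the inputs `Λ₂ ((Γ ⊗ id) ρ)` and `Λ₂ ρ` that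
`Λ₁` receives have equal Bob-marginals, and hence so do their images under `Λ₁`. -/

namespace IsChannel

variable {n : Type*} [Fintype n] [DecidableEq n] {Λ Λ' : Matrix n n ℂ → Matrix n n ℂ}

theorem of_kraus {ι : Type*} [Fintype ι] (K : ι → Matrix n n ℂ)
    (hΛ : ∀ X, Λ X = ∑ i, K i * X * (K i)ᴴ) (hK : ∑ i, (K i)ᴴ * K i = 1) : IsChannel Λ := by
  let e := (Fintype.equivFin ι).symm
  exact ⟨Fintype.card ι, K ∘ e, fun X => by simp [hΛ, e.sum_comp (fun i => K i * X * (K i)ᴴ)],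
    by simpa [e.sum_comp (fun i => (K i)ᴴ * K i)] using hK⟩

theorem comp (hΛ : IsChannel Λ) (hΛ' : IsChannel Λ') : IsChannel (Λ ∘ Λ') := by
  obtain ⟨m, K, hK, hs⟩ := hΛ
  obtain ⟨m', K', hK', hs'⟩ := hΛ'
  refine of_kraus (fun i : Fin m × Fin m' => K i.1 * K' i.2) (fun X => ?_) ?_
  · simp [hK, hK', Fintype.sum_prod_type, Finset.mul_sum, Finset.sum_mul, conjTranspose_mul,
      mul_assoc]
  · calc ∑ i : Fin m × Fin m', (K i.1 * K' i.2)ᴴ * (K i.1 * K' i.2)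
        = ∑ j, (K' j)ᴴ * (∑ i, (K i)ᴴ * K i) * K' j := by
          simp [Fintype.sum_prod_type_right, Finset.mul_sum, Finset.sum_mul, conjTranspose_mul,
            mul_assoc]
      _ = 1 := by simpa [hs] using hs'

theorem isState_apply (hΛ : IsChannel Λ) {ρ : Matrix n n ℂ} (hρ : IsState ρ) :
    IsState (Λ ρ) := by
  obtain ⟨m, K, hK, hs⟩ := hΛ
  rw [hK]
  refine ⟨Finset.sum_induction _ _ (fun _ _ => PosSemidef.add) PosSemidef.zero
    fun i _ => hρ.1.mul_mul_conjTranspose_same (K i), ?_⟩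
  calc (∑ i, K i * ρ * (K i)ᴴ).trace = (∑ i, (K i)ᴴ * K i * ρ).trace := by
        simp only [trace_sum]
        exact Finset.sum_congr rfl fun i _ => by rw [trace_mul_comm, mul_assoc]
    _ = 1 := by rw [← Finset.sum_mul, hs, one_mul, hρ.2]

end IsChannel

section Bipartite

variable {A B : Type*}

theorem tensIdA_conj_eq_kronecker [Fintype A] [Fintype B] [DecidableEq B] (M : Matrix A A ℂ)
    (ρ : Matrix (A × B) (A × B) ℂ) :
    tensIdA (fun X => M * X * Mᴴ) ρ = (M ⊗ₖ (1 : Matrix B B ℂ)) * ρ * (M ⊗ₖ 1)ᴴ := by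
  ext ⟨a, b⟩ ⟨a', b'⟩
  simp only [tensIdA, mul_apply, conjTranspose_apply, kroneckerMap_apply,
    Fintype.sum_prod_type, one_apply, of_apply]
  simp [Finset.sum_mul, Finset.mul_sum, apply_ite, mul_comm, mul_left_comm]

theorem IsChannel.tensIdA [Fintype A] [Fintype B] [DecidableEq A] [DecidableEq B]
    {Γ : Matrix A A ℂ → Matrix A A ℂ} (hΓ : IsChannel Γ) :
    IsChannel (tensIdA (B := B) Γ) := by
  obtain ⟨m, K, hK, hs⟩ := hΓ
  refine ⟨m, fun i => K i ⊗ₖ (1 : Matrix B B ℂ), fun X => ?_, ?_⟩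
  · ext p q
    simp only [_root_.tensIdA, of_apply, hK, Matrix.sum_apply, ← tensIdA_conj_eq_kronecker]
  · simp_rw [conjTranspose_kronecker, conjTranspose_one, ← mul_kronecker_mul, one_mul,
      ← one_kronecker_one (α := ℂ) (m := A), ← hs]
    ext
    simp [Matrix.sum_apply, Finset.sum_mul]

def replaceA [Fintype A] [DecidableEq A] (a₀ : A) (X : Matrix A A ℂ) : Matrix A A ℂ :=
  X.trace • single a₀ a₀ 1

theorem isChannel_replaceA [Fintype A] [DecidableEq A] (a₀ : A) : IsChannel (replaceA a₀) := by
  refine IsChannel.of_kraus (fun c => single a₀ c (1 : ℂ)) (fun X => ?_) ?_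
  · simp [replaceA, trace, Finset.sum_smul]
  · simp [sum_single_one]

theorem tensIdA_replaceA_congr [Fintype A] [DecidableEq A] (a₀ : A)
    {σ σ' : Matrix (A × B) (A × B) ℂ} (h : trA σ = trA σ') :
    tensIdA (replaceA a₀) σ = tensIdA (replaceA a₀) σ' := by
  ext p q
  have key : ∀ τ : Matrix (A × B) (A × B) ℂ,
      (of fun a a' => τ (a, p.2) (a', q.2)).trace = trA τ p.2 q.2 := fun τ => rfl
  simp only [_root_.tensIdA, replaceA, of_apply, key, h]

theorem SemicausalAtoB.trA_congr [Fintype A] [Fintype B] [DecidableEq A]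
    {Λ : Matrix (A × B) (A × B) ℂ → Matrix (A × B) (A × B) ℂ} (hΛ : SemicausalAtoB Λ)
    {σ σ' : Matrix (A × B) (A × B) ℂ} (hσ : IsState σ) (hσ' : IsState σ')
    (h : trA σ = trA σ') : trA (Λ σ) = trA (Λ σ') := by
  cases isEmpty_or_nonempty A with
  | inl => ext; simp [trA]
  | inr hA =>
    obtain ⟨a₀⟩ := hA
    calc trA (Λ σ) = trA (Λ (tensIdA (replaceA a₀) σ)) :=
          (hΛ σ hσ _ (isChannel_replaceA a₀)).symm
      _ = trA (Λ (tensIdA (replaceA a₀) σ')) := by rw [tensIdA_replaceA_congr a₀ h]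
      _ = trA (Λ σ') := hΛ σ' hσ' _ (isChannel_replaceA a₀)

end Bipartite

theorem stmt_4_general {A B : Type*} [Fintype A] [Fintype B] [DecidableEq A] [DecidableEq B]
    (Λ₁ Λ₂ : Matrix (A × B) (A × B) ℂ → Matrix (A × B) (A × B) ℂ)
    (h1chan : IsChannel Λ₁) (h1 : SemicausalAtoB Λ₁)
    (h2chan : IsChannel Λ₂) (h2 : SemicausalAtoB Λ₂) :
    IsChannel (Λ₁ ∘ Λ₂) ∧ SemicausalAtoB (Λ₁ ∘ Λ₂) :=
  ⟨h1chan.comp h2chan, fun ρ hρ Γ hΓ =>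
    h1.trA_congr (h2chan.isState_apply (hΓ.tensIdA.isState_apply hρ))
      (h2chan.isState_apply hρ) (h2 ρ hρ Γ hΓ)⟩

/-- the composition of two A↛B semicausal channels is an
A↛B semicausal channel. -/
theorem stmt_4 {A B : Type*} [Fintype A] [Fintype B] [DecidableEq A] [DecidableEq B]
    [Nonempty A] [Nonempty B]
    (Λ₁ Λ₂ : Matrix (A × B) (A × B) ℂ → Matrix (A × B) (A × B) ℂ)
    (h1chan : IsChannel Λ₁) (h1 : SemicausalAtoB Λ₁)
    (h2chan : IsChannel Λ₂) (h2 : SemicausalAtoB Λ₂) :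
    IsChannel (Λ₁ ∘ Λ₂) ∧ SemicausalAtoB (Λ₁ ∘ Λ₂) :=
  stmt_4_general Λ₁ Λ₂ h1chan h1 h2chan h2
end
end

section
/- On two qubits (A = B = Fin 2), let |ψ₀⟩ = (|00⟩ + |11⟩)/√2 and |ψ₁⟩ = (|01⟩ + |10⟩)/√2, and define the coherent quantum non-local box Λ_NL on matrices indexed by (A × B) × (A × B) by Λ_NL[X] = (Tr(X) − X((1,1),(1,1)))·|ψ₀⟩⟨ψ₀| + X((1,1),(1,1))·|ψ₁⟩⟨ψ₁| (so that on a state ρ, Λ_NL[ρ] = (1−p)|ψ₀⟩⟨ψ₀| + p|ψ₁⟩⟨ψ₁| with p = ⟨11|ρ|11⟩). Then Λ_NL is a channel (completely positive and trace-preserving) and is causal. -/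
open Matrix BigOperators
open scoped Kronecker ComplexOrder

noncomputable section

/-- The rank-one projector `|v⟩⟨v|` onto a vector `v`. -/
def projv {n : Type*} (v : n → ℂ) : Matrix n n ℂ :=
  Matrix.of fun i j => v i * star (v j)

/-- `|ψ₀⟩ = (|00⟩ + |11⟩)/√2`. -/
def psi0 : Fin 2 × Fin 2 → ℂ :=
  fun p => if p.1 = p.2 then ((Real.sqrt 2 : ℂ))⁻¹ else 0

/-- `|ψ₁⟩ = (|01⟩ + |10⟩)/√2`. -/
def psi1 : Fin 2 × Fin 2 → ℂ :=
  fun p => if p.1 ≠ p.2 then ((Real.sqrt 2 : ℂ))⁻¹ else 0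

/-- The coherent quantum non-local box
`Λ_NL[X] = (Tr(X) − X((1,1),(1,1)))·|ψ₀⟩⟨ψ₀| + X((1,1),(1,1))·|ψ₁⟩⟨ψ₁|`. -/
def lamNL (X : Matrix (Fin 2 × Fin 2) (Fin 2 × Fin 2) ℂ) :
    Matrix (Fin 2 × Fin 2) (Fin 2 × Fin 2) ℂ :=
  (X.trace - X (1, 1) (1, 1)) • projv psi0 + X (1, 1) (1, 1) • projv psi1

/-!
`Λ_NL` is a measure-and-prepare channel: it measures in the computational basis and prepares
`|ψ₁⟩` on outcome `11` and `|ψ₀⟩` otherwise, with Kraus operators `|ψ_e⟩⟨e|`. Both Bell states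
have maximally mixed marginals, so each reduced output is `Tr(X) • 𝟙/2`; a channel applied
beforehand on one side preserves `Tr(X)`, so it cannot change either marginal.
-/

theorem projv_eq_vecMulVec {n : Type*} (v : n → ℂ) : projv v = vecMulVec v (star v) := rfl

section Channel

variable {n : Type*} [Fintype n] [DecidableEq n]

theorem IsChannel.trace_apply {Λ : Matrix n n ℂ → Matrix n n ℂ} (hΛ : IsChannel Λ)
    (X : Matrix n n ℂ) : (Λ X).trace = X.trace := by
  obtain ⟨m, K, hK, hK1⟩ := hΛ
  calc (Λ X).trace = ∑ i, ((K i)ᴴ * K i * X).trace := by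
        rw [hK, trace_sum]
        exact Finset.sum_congr rfl fun i _ => trace_mul_cycle _ _ _
    _ = X.trace := by rw [← trace_sum, ← Finset.sum_mul, hK1, Matrix.one_mul]

theorem vecMulVec_single_mul_mul_conjTranspose (v : n → ℂ) (e : n) (X : Matrix n n ℂ) :
    vecMulVec v (Pi.single e 1) * X * (vecMulVec v (Pi.single e 1))ᴴ = X e e • projv v := by
  rw [conjTranspose_vecMulVec, vecMulVec_mul, vecMulVec_mul_vecMulVec, projv_eq_vecMulVec,
    vecMulVec_smul]
  simp

theorem conjTranspose_vecMulVec_single_mul_self {v : n → ℂ} (hv : star v ⬝ᵥ v = 1) (e : n) :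
    (vecMulVec v (Pi.single e 1))ᴴ * vecMulVec v (Pi.single e 1) = single e e 1 := by
  rw [conjTranspose_vecMulVec, vecMulVec_mul_vecMulVec, hv, one_smul]
  simp [single_eq_single_vecMulVec_single]

theorem isChannel_measurePrepare (ψ : n → n → ℂ) (hψ : ∀ e, star (ψ e) ⬝ᵥ ψ e = 1) :
    IsChannel fun X => ∑ e, X e e • projv (ψ e) := by
  let K : n → Matrix n n ℂ := fun e => vecMulVec (ψ e) (Pi.single e 1)
  refine ⟨Fintype.card n, fun i => K ((Fintype.equivFin n).symm i), fun X => ?_, ?_⟩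
  · rw [Equiv.sum_comp (Fintype.equivFin n).symm (fun e => K e * X * (K e)ᴴ)]
    simp_rw [K, vecMulVec_single_mul_mul_conjTranspose]
  · rw [Equiv.sum_comp (Fintype.equivFin n).symm (fun e => (K e)ᴴ * K e)]
    simp_rw [K, conjTranspose_vecMulVec_single_mul_self (hψ _), sum_single_one]

end Channel

section Causality

variable {A B : Type*}

theorem trace_tensIdA [Fintype A] [Fintype B] {Γ : Matrix A A ℂ → Matrix A A ℂ}
    (hΓ : ∀ M, (Γ M).trace = M.trace) (ρ : Matrix (A × B) (A × B) ℂ) : (tensIdA Γ ρ).trace = ρ.trace := by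
  simp only [trace, diag, tensIdA, of_apply, Fintype.sum_prod_type]
  rw [Finset.sum_comm]
  exact (Finset.sum_congr rfl fun b _ => hΓ (of fun a a' => ρ (a, b) (a', b))).trans
    Finset.sum_comm

theorem trace_tensIdB [Fintype A] [Fintype B] {Γ : Matrix B B ℂ → Matrix B B ℂ}
    (hΓ : ∀ M, (Γ M).trace = M.trace) (ρ : Matrix (A × B) (A × B) ℂ) : (tensIdB Γ ρ).trace = ρ.trace := by
  simp only [trace, diag, tensIdB, of_apply, Fintype.sum_prod_type]
  exact Finset.sum_congr rfl fun a _ => hΓ (of fun b b' => ρ (a, b) (a, b'))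

theorem semicausalAtoB_of_trA_eq_trace_smul [Fintype A] [Fintype B] [DecidableEq A]
    {Λ : Matrix (A × B) (A × B) ℂ → Matrix (A × B) (A × B) ℂ} (σ : Matrix B B ℂ)
    (hΛ : ∀ X, trA (Λ X) = X.trace • σ) : SemicausalAtoB Λ := fun ρ _ _ hΓ => by
  rw [hΛ, hΛ, trace_tensIdA hΓ.trace_apply]

theorem semicausalBtoA_of_trB_eq_trace_smul [Fintype A] [Fintype B] [DecidableEq B]
    {Λ : Matrix (A × B) (A × B) ℂ → Matrix (A × B) (A × B) ℂ} (σ : Matrix A A ℂ)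
    (hΛ : ∀ X, trB (Λ X) = X.trace • σ) : SemicausalBtoA Λ := fun ρ _ _ hΓ => by
  rw [hΛ, hΛ, trace_tensIdB hΓ.trace_apply]

theorem trA_add [Fintype A] (ρ σ : Matrix (A × B) (A × B) ℂ) :
    trA (ρ + σ) = trA ρ + trA σ := by
  ext; simp [trA, Finset.sum_add_distrib]

theorem trA_smul [Fintype A] (c : ℂ) (ρ : Matrix (A × B) (A × B) ℂ) :
    trA (c • ρ) = c • trA ρ := by
  ext; simp [trA, Finset.mul_sum]

theorem trB_add [Fintype B] (ρ σ : Matrix (A × B) (A × B) ℂ) :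
    trB (ρ + σ) = trB ρ + trB σ := by
  ext; simp [trB, Finset.sum_add_distrib]

theorem trB_smul [Fintype B] (c : ℂ) (ρ : Matrix (A × B) (A × B) ℂ) :
    trB (c • ρ) = c • trB ρ := by
  ext; simp [trB, Finset.mul_sum]

end Causality

theorem inv_sqrt_two_mul_self : ((√2 : ℝ) : ℂ)⁻¹ * ((√2 : ℝ) : ℂ)⁻¹ = 2⁻¹ := by
  rw [← mul_inv, ← Complex.ofReal_mul, Real.mul_self_sqrt zero_le_two]; norm_num

theorem star_psi0_dotProduct_psi0 : star psi0 ⬝ᵥ psi0 = 1 := by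
  simp [dotProduct, Fintype.sum_prod_type, psi0, inv_sqrt_two_mul_self]

theorem star_psi1_dotProduct_psi1 : star psi1 ⬝ᵥ psi1 = 1 := by
  norm_num [dotProduct, Fintype.sum_prod_type, psi1, inv_sqrt_two_mul_self]

theorem trA_projv_psi0 : trA (projv psi0) = (2⁻¹ : ℂ) • 1 := by
  ext b b'
  fin_cases b <;> fin_cases b' <;>
    simp [trA, projv, psi0, inv_sqrt_two_mul_self]

theorem trA_projv_psi1 : trA (projv psi1) = (2⁻¹ : ℂ) • 1 := by
  ext b b'
  fin_cases b <;> fin_cases b' <;>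
    simp [trA, projv, psi1, inv_sqrt_two_mul_self]

theorem trB_projv_psi0 : trB (projv psi0) = (2⁻¹ : ℂ) • 1 := by
  ext b b'
  fin_cases b <;> fin_cases b' <;>
    simp [trB, projv, psi0, inv_sqrt_two_mul_self]

theorem trB_projv_psi1 : trB (projv psi1) = (2⁻¹ : ℂ) • 1 := by
  ext b b'
  fin_cases b <;> fin_cases b' <;>
    simp [trB, projv, psi1, inv_sqrt_two_mul_self]

theorem lamNL_eq_measurePrepare :
    lamNL = fun X => ∑ e, X e e • projv (if e = (1, 1) then psi1 else psi0) := by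
  ext1 X
  simp only [lamNL, trace, diag, Fintype.sum_prod_type, Fin.sum_univ_two, Prod.mk.injEq,
    zero_ne_one, and_true, and_false, ite_true, ite_false]
  module

theorem trA_lamNL (X : Matrix (Fin 2 × Fin 2) (Fin 2 × Fin 2) ℂ) :
    trA (lamNL X) = X.trace • (2⁻¹ : ℂ) • 1 := by
  rw [lamNL, trA_add, trA_smul, trA_smul, trA_projv_psi0, trA_projv_psi1, ← add_smul,
    sub_add_cancel]

theorem trB_lamNL (X : Matrix (Fin 2 × Fin 2) (Fin 2 × Fin 2) ℂ) :
    trB (lamNL X) = X.trace • (2⁻¹ : ℂ) • 1 := by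
  rw [lamNL, trB_add, trB_smul, trB_smul, trB_projv_psi0, trB_projv_psi1, ← add_smul,
    sub_add_cancel]

/-- the coherent quantum non-local box `Λ_NL` is a channel and is
causal. -/
theorem stmt_18 : IsChannel lamNL ∧ Causal lamNL := by
  refine ⟨?_, semicausalAtoB_of_trA_eq_trace_smul _ trA_lamNL,
    semicausalBtoA_of_trB_eq_trace_smul _ trB_lamNL⟩
  rw [lamNL_eq_measurePrepare]
  refine isChannel_measurePrepare _ fun e => ?_
  split_ifs
  exacts [star_psi1_dotProduct_psi1, star_psi0_dotProduct_psi0]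
end
end
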